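/- arXiv:2006.07889 — 4 statements merged into one kernel-verified Lean document; each statement's English description precedes it below -/
import Mathlib

section
/- Let G be a finite simple graph in which every vertex has degree at least 1, and let u ≠ v be vertices of G lying in the same connected component. Let h* = dist(u,v) denote the graph distance between u and v, let m denote the (finite) number of simple paths in G from u to v, and let D* = min_p GM(p), the minimum of the degree geometric means over all simple paths p from u to v. Then the node influence satisfies I(u,v) ≤ m / (D*)^{h*}. (Decaying Property of Node Influence, Theorem 1.) -/
open SimpleGraph

/-- Weight of a walk: product of reciprocal degrees of all vertices except the final endpoint. -/
noncomputable def pathWeight {V : Type*} [Fintype V] (G : SimpleGraph V) [DecidableRel G.Adj]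
    {u v : V} (p : G.Walk u v) : ℝ :=
  (p.support.dropLast.map fun w => ((G.degree w : ℝ))⁻¹).prod

/-- Degree geometric mean of a walk. -/
noncomputable def pathGM {V : Type*} [Fintype V] (G : SimpleGraph V) [DecidableRel G.Adj]
    {u v : V} (p : G.Walk u v) : ℝ :=
  ((p.support.dropLast.map fun w => ((G.degree w : ℝ))).prod) ^ ((p.length : ℝ)⁻¹)

/-- Node influence: sum of weights over all simple paths from `u` to `v`. -/
noncomputable def influence {V : Type*} [Fintype V] [DecidableEq V] (G : SimpleGraph V)
    [DecidableRel G.Adj] (u v : V) : ℝ :=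
  ∑ p : G.Path u v, pathWeight G p.val

section aux

variable {V : Type*} [Fintype V] (G : SimpleGraph V) [DecidableRel G.Adj] {u v : V}

lemma one_le_prodDeg (hdeg : ∀ w : V, 1 ≤ G.degree w) (p : G.Walk u v) :
    1 ≤ (p.support.dropLast.map fun w => ((G.degree w : ℝ))).prod := by
  induction p.support.dropLast with
  | nil => simp
  | cons a l ih =>
    simp only [List.map_cons, List.prod_cons]
    have ha : (1:ℝ) ≤ (G.degree a : ℝ) := by exact_mod_cast hdeg a
    calc (1:ℝ) = 1 * 1 := by ring
      _ ≤ _ := mul_le_mul ha ih zero_le_one (le_trans zero_le_one ha)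

lemma one_le_pathGM (hdeg : ∀ w : V, 1 ≤ G.degree w) (p : G.Walk u v) : 1 ≤ pathGM G p := by
  exact Real.one_le_rpow (one_le_prodDeg G hdeg p) (by positivity)

lemma pathGM_pow_length (hdeg : ∀ w : V, 1 ≤ G.degree w) (p : G.Walk u v) (hl : p.length ≠ 0) :
    pathGM G p ^ p.length = (p.support.dropLast.map fun w => ((G.degree w : ℝ))).prod := by
  have hP : (0:ℝ) < (p.support.dropLast.map fun w => ((G.degree w : ℝ))).prod :=
    lt_of_lt_of_le one_pos (one_le_prodDeg G hdeg p)
  rw [pathGM, ← Real.rpow_natCast (_ ^ _) p.length, ← Real.rpow_mul hP.le,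
    inv_mul_cancel₀ (by exact_mod_cast hl), Real.rpow_one]

lemma pathWeight_eq (p : G.Walk u v) :
    pathWeight G p = ((p.support.dropLast.map fun w => ((G.degree w : ℝ))).prod)⁻¹ := by
  rw [pathWeight]
  induction p.support.dropLast with
  | nil => simp
  | cons a l ih => simp [ih, mul_inv, mul_comm]

end aux

theorem stmt0 {V : Type*} [Fintype V] [DecidableEq V] (G : SimpleGraph V) [DecidableRel G.Adj]
    (hdeg : ∀ w : V, 1 ≤ G.degree w) (u v : V) (hne : u ≠ v) (hreach : G.Reachable u v) :
    influence G u v ≤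
      (Fintype.card (G.Path u v) : ℝ) /
        (⨅ p : G.Path u v, pathGM G p.val) ^ (G.dist u v) := by
  have hNE : Nonempty (G.Path u v) := ⟨(hreach.some).toPath⟩
  have hbdd : BddBelow (Set.range fun p : G.Path u v => pathGM G p.val) :=
    (Set.finite_range _).bddBelow
  set D : ℝ := ⨅ p : G.Path u v, pathGM G p.val with hD
  have hD1 : 1 ≤ D := le_ciInf fun p => one_le_pathGM G hdeg p.val
  have hDpos : 0 < D := lt_of_lt_of_le one_pos hD1
  have key : ∀ p : G.Path u v, pathWeight G p.val ≤ (D ^ G.dist u v)⁻¹ := by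
    intro p
    have hlen : p.val.length ≠ 0 := fun h => hne (p.val.eq_of_length_eq_zero h)
    have hdist : G.dist u v ≤ p.val.length := SimpleGraph.dist_le p.val
    have hGM1 : 1 ≤ pathGM G p.val := one_le_pathGM G hdeg p.val
    have hDle : D ≤ pathGM G p.val := ciInf_le hbdd p
    rw [pathWeight_eq, ← pathGM_pow_length G hdeg p.val hlen]
    rw [inv_le_inv₀ (lt_of_lt_of_le one_pos (one_le_pow₀ hGM1))
      (pow_pos hDpos _)]
    calc D ^ G.dist u v ≤ pathGM G p.val ^ G.dist u v :=
          pow_le_pow_left₀ hDpos.le hDle _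
      _ ≤ pathGM G p.val ^ p.val.length := pow_le_pow_right₀ hGM1 hdist
  calc influence G u v ≤ ∑ _p : G.Path u v, (D ^ G.dist u v)⁻¹ :=
        Finset.sum_le_sum fun p _ => key p
    _ = (Fintype.card (G.Path u v) : ℝ) / D ^ G.dist u v := by
        rw [Finset.sum_const, Finset.card_univ, nsmul_eq_mul, div_eq_mul_inv]
end

section
/- Let G be a finite connected simple graph in which every vertex has degree at least 1, let u be a vertex of G, let h ≥ 0 be an integer, and suppose the set V \ B_h(u) of vertices at distance greater than h from u is nonempty. Let M = max_{w ∈ V \ B_h(u)} m_w, where m_w is the number of simple paths from u to w, and let D = min over all w ∈ V \ B_h(u) and all simple paths p from u to w of GM(p). Then the graph influence loss satisfies R_h(u) ≤ |V \ B_h(u)| · M / D^{h+1}. (Local Subgraph Preservation Property, Theorem 2.) -/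
open SimpleGraph

section Aux
variable {V : Type*} [Fintype V] (G : SimpleGraph V) [DecidableRel G.Adj]

lemma aux_list_one_le_prod {l : List ℝ} (h : ∀ x ∈ l, (1:ℝ) ≤ x) : (1:ℝ) ≤ l.prod := by
  induction l with
  | nil => simp
  | cons a l ih =>
    have ha := h a (by simp)
    have hl := ih (fun x hx => h x (by simp [hx]))
    simp only [List.prod_cons]
    nlinarith

lemma aux_prod_one_le (hdeg : ∀ w : V, 1 ≤ G.degree w) {u v : V} (p : G.Walk u v) :
    (1:ℝ) ≤ (p.support.dropLast.map fun w => ((G.degree w : ℝ))).prod := by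
  apply aux_list_one_le_prod
  intro x hx
  simp only [List.mem_map] at hx
  obtain ⟨w, _, rfl⟩ := hx
  exact_mod_cast hdeg w

lemma aux_gm_one_le (hdeg : ∀ w : V, 1 ≤ G.degree w) {u v : V} (p : G.Walk u v) :
    (1:ℝ) ≤ pathGM G p :=
  Real.one_le_rpow (aux_prod_one_le G hdeg p) (by positivity)

lemma aux_gm_pow (hdeg : ∀ w : V, 1 ≤ G.degree w) {u v : V} (p : G.Walk u v)
    (hl : p.length ≠ 0) :
    (pathGM G p) ^ p.length = (p.support.dropLast.map fun w => ((G.degree w : ℝ))).prod := by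
  have h0 : (0:ℝ) ≤ (p.support.dropLast.map fun w => ((G.degree w : ℝ))).prod :=
    le_trans zero_le_one (aux_prod_one_le G hdeg p)
  rw [pathGM, ← Real.rpow_natCast (_ ^ _) p.length, ← Real.rpow_mul h0,
    inv_mul_cancel₀ (by exact_mod_cast hl), Real.rpow_one]

lemma aux_weight_eq {u v : V} (p : G.Walk u v) :
    pathWeight G p = ((p.support.dropLast.map fun w => ((G.degree w : ℝ))).prod)⁻¹ := by
  rw [pathWeight]
  induction (p.support.dropLast) with
  | nil => simp
  | cons a l ih => simp [ih, mul_inv, mul_comm]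

end Aux

/-- Local Subgraph Preservation Property (Theorem 2): for a connected graph, the total influence
on `u` of the vertices at distance greater than `h` from `u` (the graph influence loss of the
`h`-hop local subgraph) is at most `|V \ B_h(u)| · M / D^(h+1)`, where `M` is the largest number
of simple paths from `u` to such a vertex and `D` is the minimum degree geometric mean over all
simple paths from `u` to such vertices. -/
theorem stmt1 {V : Type*} [Fintype V] [DecidableEq V] (G : SimpleGraph V) [DecidableRel G.Adj]
    (hconn : G.Connected) (hdeg : ∀ w : V, 1 ≤ G.degree w) (u : V) (h : ℕ)
    (hS : (Finset.univ.filter fun w : V => h < G.dist u w).Nonempty) :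
    ∑ w ∈ Finset.univ.filter (fun w : V => h < G.dist u w), influence G u w ≤
      ((Finset.univ.filter fun w : V => h < G.dist u w).card : ℝ) *
        ((Finset.univ.filter fun w : V => h < G.dist u w).sup' hS
          fun w => (Fintype.card (G.Path u w) : ℝ)) /
        (sInf {x : ℝ | ∃ w ∈ Finset.univ.filter (fun w : V => h < G.dist u w),
          ∃ p : G.Path u w, x = pathGM G p.val}) ^ (h + 1) := by
  classical
  set S := Finset.univ.filter (fun w : V => h < G.dist u w) with hSdef
  set T : Set ℝ := {x : ℝ | ∃ w ∈ S, ∃ p : G.Path u w, x = pathGM G p.val} with hTdef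
  set D : ℝ := sInf T with hDdef
  set M : ℝ := S.sup' hS fun w => (Fintype.card (G.Path u w) : ℝ) with hMdef
  -- every element of T is ≥ 1
  have hT1 : ∀ x ∈ T, (1:ℝ) ≤ x := by
    rintro x ⟨w, hw, p, rfl⟩
    exact aux_gm_one_le G hdeg p.val
  have hTbdd : BddBelow T := ⟨1, hT1⟩
  have hTne : T.Nonempty := by
    obtain ⟨w, hw⟩ := hS
    obtain ⟨q⟩ := hconn.preconnected u w
    exact ⟨pathGM G q.toPath.val, w, hw, q.toPath, rfl⟩
  have hD1 : (1:ℝ) ≤ D := le_csInf hTne hT1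
  have hDpos : (0:ℝ) < D ^ (h+1) := by positivity
  -- length bound for paths to w ∈ S
  have hlen : ∀ w ∈ S, ∀ p : G.Path u w, h + 1 ≤ p.val.length := by
    intro w hw p
    have hd : h < G.dist u w := by simpa [hSdef] using hw
    exact le_trans hd (SimpleGraph.dist_le p.val)
  -- key pointwise bound
  have hkey : ∀ w ∈ S, ∀ p : G.Path u w, pathWeight G p.val ≤ (D ^ (h+1))⁻¹ := by
    intro w hw p
    have hlp := hlen w hw p
    have hl0 : p.val.length ≠ 0 := by omega
    have hDle : D ≤ pathGM G p.val := csInf_le hTbdd ⟨w, hw, p, rfl⟩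
    have h1 : D ^ (h+1) ≤ D ^ p.val.length := pow_le_pow_right₀ hD1 hlp
    have h2 : D ^ p.val.length ≤ (pathGM G p.val) ^ p.val.length :=
      pow_le_pow_left₀ (by linarith) hDle _
    rw [aux_weight_eq, ← aux_gm_pow G hdeg p.val hl0]
    exact inv_anti₀ hDpos (le_trans h1 h2)
  -- influence bound
  have hinf : ∀ w ∈ S, influence G u w ≤ (Fintype.card (G.Path u w) : ℝ) * (D ^ (h+1))⁻¹ := by
    intro w hw
    rw [influence]
    calc ∑ p : G.Path u w, pathWeight G p.val ≤ ∑ _p : G.Path u w, (D ^ (h+1))⁻¹ :=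
          Finset.sum_le_sum fun p _ => hkey w hw p
      _ = (Fintype.card (G.Path u w) : ℝ) * (D ^ (h+1))⁻¹ := by
          rw [Finset.sum_const, Fintype.card, nsmul_eq_mul]
  have hMle : ∀ w ∈ S, (Fintype.card (G.Path u w) : ℝ) ≤ M :=
    fun w hw => Finset.le_sup' (fun w => (Fintype.card (G.Path u w) : ℝ)) hw
  calc ∑ w ∈ S, influence G u w ≤ ∑ _w ∈ S, M * (D ^ (h+1))⁻¹ := by
        apply Finset.sum_le_sum
        intro w hw
        exact le_trans (hinf w hw)
          (mul_le_mul_of_nonneg_right (hMle w hw) (by positivity))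
    _ = (S.card : ℝ) * (M * (D ^ (h+1))⁻¹) := by simp [Finset.sum_const, nsmul_eq_mul]
    _ = (S.card : ℝ) * M / D ^ (h+1) := by ring
end

section
/- Let G be a finite simple graph in which every vertex has degree at least 1, let u be a vertex, let h ≥ 0 be an integer, and let w be a vertex in the same connected component as u with dist(u,w) ≥ h + 1. Let m_w be the number of simple paths from u to w and let D*_w = min_p GM(p) over all simple paths p from u to w. Then I(u,w) ≤ m_w / (D*_w)^{h+1}. (Per-node influence bound for vertices outside the h-hop ball, used in the proof of Theorem 2.) -/
open SimpleGraph

/-- Per-node influence bound for vertices outside the `h`-hop ball. -/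
theorem stmt2 {V : Type*} [Fintype V] [DecidableEq V] (G : SimpleGraph V) [DecidableRel G.Adj]
    (hdeg : ∀ x : V, 1 ≤ G.degree x) (u w : V) (h : ℕ) (hreach : G.Reachable u w)
    (hdist : h + 1 ≤ G.dist u w) :
    influence G u w ≤
      (Fintype.card (G.Path u w) : ℝ) /
        (⨅ p : G.Path u w, pathGM G p.val) ^ (h + 1) := by
  have hne : Nonempty (G.Path u w) := hreach.elim fun q => ⟨q.toPath⟩
  set S := ⨅ p : G.Path u w, pathGM G p.val with hSdef
  -- product of degrees along a walk is ≥ 1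
  have hprod : ∀ p : G.Walk u w,
      (1 : ℝ) ≤ (p.support.dropLast.map fun x => ((G.degree x : ℝ))).prod := by
    intro p
    have gen : ∀ l : List V, (1:ℝ) ≤ (l.map fun x => ((G.degree x : ℝ))).prod := by
      intro l
      induction l with
      | nil => simp
      | cons a t ih =>
          simp only [List.map_cons, List.prod_cons]
          have ha : (1:ℝ) ≤ (G.degree a : ℝ) := by exact_mod_cast hdeg a
          nlinarith
    exact gen _
  have hGM1 : ∀ p : G.Path u w, 1 ≤ pathGM G p.val := by
    intro p
    exact Real.one_le_rpow (hprod p.val) (by positivity)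
  have hS1 : 1 ≤ S := le_ciInf hGM1
  have hS0 : (0:ℝ) < S ^ (h+1) := pow_pos (lt_of_lt_of_le one_pos hS1) _
  have key : ∀ p : G.Path u w, pathWeight G p.val ≤ (S ^ (h+1))⁻¹ := by
    intro p
    set P := (p.val.support.dropLast.map fun x => ((G.degree x : ℝ))).prod with hPdef
    have hP1 : (1:ℝ) ≤ P := hprod p.val
    have hP0 : (0:ℝ) ≤ P := le_trans zero_le_one hP1
    have hwt : pathWeight G p.val = P⁻¹ := by
      have gen : ∀ l : List V, (l.map fun x => ((G.degree x : ℝ))⁻¹).prod =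
          ((l.map fun x => ((G.degree x : ℝ))).prod)⁻¹ := by
        intro l
        induction l with
        | nil => simp
        | cons a t ih => simp [ih, mul_inv, mul_comm]
      exact gen _
    have hn : h + 1 ≤ p.val.length := le_trans hdist (SimpleGraph.dist_le p.val)
    have hnpos : (0:ℝ) < (p.val.length : ℝ) := by
      exact_mod_cast Nat.lt_of_lt_of_le (Nat.succ_pos h) hn
    -- GM^(h+1) ≤ P
    have hGMpow : pathGM G p.val ^ (h+1) ≤ P := by
      have h1 : pathGM G p.val ^ (h+1) = P ^ (((p.val.length : ℝ))⁻¹ * ((h:ℝ)+1)) := by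
        rw [pathGM, ← Real.rpow_natCast (_ ^ _) (h+1), ← Real.rpow_mul hP0]
        push_cast
        ring_nf
      rw [h1]
      calc P ^ (((p.val.length : ℝ))⁻¹ * ((h:ℝ)+1)) ≤ P ^ (1:ℝ) := by
            apply Real.rpow_le_rpow_of_exponent_le hP1
            rw [inv_mul_le_iff₀ hnpos, mul_one]
            exact_mod_cast hn
        _ = P := Real.rpow_one P
    have hSP : S ^ (h+1) ≤ P := by
      refine le_trans (pow_le_pow_left₀ (le_trans zero_le_one hS1) ?_ _) hGMpow
      exact ciInf_le (Finite.bddBelow_range _) p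
    rw [hwt]
    exact inv_anti₀ hS0 hSP
  calc influence G u w ≤ ∑ _p : G.Path u w, (S ^ (h+1))⁻¹ :=
        Finset.sum_le_sum fun p _ => key p
    _ = (Fintype.card (G.Path u w) : ℝ) * (S ^ (h+1))⁻¹ := by
        rw [Finset.sum_const, Finset.card_univ, nsmul_eq_mul]
    _ = (Fintype.card (G.Path u w) : ℝ) / S ^ (h+1) := by
        rw [div_eq_mul_inv]
end

section
/- Let G be a finite simple graph in which every vertex has degree at least 1, let M be its row-normalized adjacency matrix over ℝ, and let u ≠ v be vertices in the same connected component. For an integer L ≥ dist(u,v), let N_L be the number of walks of length L from u to v, and (assuming N_L > 0) let D_L = min over all such walks W of (∏_{i=0}^{L-1} deg(W_i))^{1/L}, the minimum degree geometric mean over length-L walks from u to v. Then (M^L)_{u,v} ≤ N_L / (D_L)^{dist(u,v)}. (Finite-depth version of the decaying node-influence bound of Theorem 1 for an L-layer linear GCN.) -/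
/-!
Expanding the matrix power, `(M^L)_{uv}` is the sum over length-`L` walks `W` from `u` to `v` of
`∏ 1/deg(W_i) = GM(W)^{-L}`. Every degree is at least `1`, so the minimal geometric mean `D_L` is
at least `1` and each term is at most `D_L^{-L} ≤ D_L^{-dist(u,v)}`.
-/

open SimpleGraph

/-- The row-normalized adjacency matrix `D⁻¹A` of a graph. -/
noncomputable def rowNormAdj {V : Type*} [Fintype V] (G : SimpleGraph V) [DecidableRel G.Adj] :
    Matrix V V ℝ :=
  fun a b => if G.Adj a b then ((G.degree a : ℝ))⁻¹ else 0

namespace SimpleGraph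

variable {V : Type*} [Fintype V] (G : SimpleGraph V) [DecidableRel G.Adj]

theorem pow_weightedAdj_apply [DecidableEq V] {R : Type*} [CommSemiring R] (f : V → R) (n : ℕ)
    (u v : V) :
    (Matrix.of (fun a b => if G.Adj a b then f a else 0) ^ n) u v =
      ∑ p ∈ G.finsetWalkLength n u v, (p.support.dropLast.map f).prod := by
  induction n generalizing u with
  | zero => obtain rfl | h := eq_or_ne u v <;> simp [finsetWalkLength, *]
  | succ n ih =>
    rw [pow_succ', Matrix.mul_apply, finsetWalkLength, Finset.sum_biUnion]
    · have hcons : ∀ (w : V) (h : G.Adj u w) (q : G.Walk w v),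
          ((Walk.cons h q).support.dropLast.map f).prod = f u * (q.support.dropLast.map f).prod :=
        fun w h q => by
          rw [Walk.support_cons, List.dropLast_cons_of_ne_nil q.support_ne_nil, List.map_cons,
            List.prod_cons]
      simp only [Finset.sum_map, Matrix.of_apply, ite_mul, zero_mul]
      rw [Finset.sum_ite, Finset.sum_const_zero, add_zero,
        Finset.sum_subtype _ (p := (· ∈ G.neighborSet u)) (by simp)]
      refine Finset.sum_congr rfl fun w _ => ?_
      rw [ih, Finset.mul_sum]
      exact Finset.sum_congr rfl fun q _ => (hcons w w.2 q).symm
    · rintro ⟨x, _⟩ - ⟨y, _⟩ - hxy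
      rw [Function.onFun, disjoint_iff_inf_le]
      intro p hp
      simp only [Finset.inf_eq_inter, Finset.mem_inter, Finset.mem_map] at hp
      obtain ⟨⟨px, -, rfl⟩, ⟨py, -, hp⟩⟩ := hp
      cases hp
      simp at hxy

theorem rowNormAdj_pow_apply [DecidableEq V] (n : ℕ) (u v : V) :
    (rowNormAdj G ^ n) u v =
      ∑ p ∈ G.finsetWalkLength n u v, (p.support.dropLast.map fun w => (G.degree w : ℝ)⁻¹).prod :=
  G.pow_weightedAdj_apply _ n u v

variable {G}

theorem pathGM_pow_length {u v : V} (p : G.Walk u v) :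
    pathGM G p ^ p.length = (p.support.dropLast.map fun w => (G.degree w : ℝ)).prod := by
  rcases Nat.eq_zero_or_pos p.length with hp | hp
  · have : p.support.dropLast = [] := by
      rw [← List.length_eq_zero_iff, List.length_dropLast, Walk.length_support, hp]
    simp [hp, this]
  · have hprod : 0 ≤ (p.support.dropLast.map fun w => (G.degree w : ℝ)).prod :=
      List.prod_nonneg fun x hx => by
        obtain ⟨w, -, rfl⟩ := List.mem_map.mp hx
        positivity
    rw [pathGM, ← Real.rpow_natCast, ← Real.rpow_mul hprod,
      inv_mul_cancel₀ (by exact_mod_cast hp.ne'), Real.rpow_one]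

theorem prod_inv_degree_eq_inv_pathGM_pow {u v : V} (p : G.Walk u v) :
    (p.support.dropLast.map fun w => (G.degree w : ℝ)⁻¹).prod = (pathGM G p ^ p.length)⁻¹ := by
  rw [pathGM_pow_length, List.prod_inv, List.map_map]
  rfl

theorem one_le_pathGM (hdeg : ∀ w : V, 1 ≤ G.degree w) {u v : V} (p : G.Walk u v) :
    1 ≤ pathGM G p :=
  Real.one_le_rpow
    (List.one_le_prod fun x hx => by
      obtain ⟨w, -, rfl⟩ := List.mem_map.mp hx
      exact_mod_cast hdeg w)
    (by positivity)

end SimpleGraph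

theorem stmt6_general {V : Type*} [Fintype V] [DecidableEq V] (G : SimpleGraph V) [DecidableRel G.Adj]
    (hdeg : ∀ w : V, 1 ≤ G.degree w) (u v : V)
    (L : ℕ) (hL : G.dist u v ≤ L)
    (hN : 0 < Fintype.card {q : G.Walk u v // q.length = L}) :
    (rowNormAdj G ^ L) u v ≤
      (Fintype.card {q : G.Walk u v // q.length = L} : ℝ) /
        (⨅ p : {q : G.Walk u v // q.length = L}, pathGM G p.val) ^ (G.dist u v) := by
  set D := ⨅ p : {q : G.Walk u v // q.length = L}, pathGM G p.val
  have : Nonempty {q : G.Walk u v // q.length = L} := Fintype.card_pos_iff.mp hN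
  have hD : 1 ≤ D := le_ciInf fun p => one_le_pathGM hdeg p.val
  have hterm : ∀ p ∈ G.finsetWalkLength L u v,
      (p.support.dropLast.map fun w => (G.degree w : ℝ)⁻¹).prod ≤ (D ^ G.dist u v)⁻¹ := by
    intro p hp
    rw [mem_finsetWalkLength_iff] at hp
    have hDp : D ≤ pathGM G p :=
      ciInf_le (Set.finite_range fun q : {q : G.Walk u v // q.length = L} => pathGM G q.val).bddBelow
        ⟨p, hp⟩
    rw [prod_inv_degree_eq_inv_pathGM_pow, hp]
    gcongr
    calc D ^ G.dist u v ≤ D ^ L := pow_le_pow_right₀ hD hL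
      _ ≤ pathGM G p ^ L := by gcongr
  have hcard : Fintype.card {q : G.Walk u v // q.length = L} = (G.finsetWalkLength L u v).card :=
    G.card_set_walk_length_eq u v L
  rw [G.rowNormAdj_pow_apply, hcard, div_eq_mul_inv, ← nsmul_eq_mul]
  exact Finset.sum_le_card_nsmul _ _ _ hterm

/-- Finite-depth decaying node-influence bound for an `L`-layer linear GCN: the `(u,v)` entry of
the `L`-th power of the row-normalized adjacency matrix is at most the number of length-`L` walks
from `u` to `v` divided by the `dist(u,v)`-th power of the minimum degree geometric mean over
those walks. -/
theorem stmt6 {V : Type*} [Fintype V] [DecidableEq V] (G : SimpleGraph V) [DecidableRel G.Adj]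
    (hdeg : ∀ w : V, 1 ≤ G.degree w) (u v : V) (hne : u ≠ v) (hreach : G.Reachable u v)
    (L : ℕ) (hL : G.dist u v ≤ L)
    (hN : 0 < Fintype.card {q : G.Walk u v // q.length = L}) :
    (rowNormAdj G ^ L) u v ≤
      (Fintype.card {q : G.Walk u v // q.length = L} : ℝ) /
        (⨅ p : {q : G.Walk u v // q.length = L}, pathGM G p.val) ^ (G.dist u v) :=
  stmt6_general G hdeg u v L hL hN
end
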